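/- arXiv:2603.06185 — 2 statements merged into one kernel-verified Lean document; each statement's English description precedes it below -/
import Mathlib

section
/- Let K(z,u) be analytic with K(z0,u0) ≠ 0, and let h0, h1 be analytic at u0 with the identity (u - g(z))^2 - h(z)^2 (z-z0)^3 = K(z,u)·((z-z0)^2 + h1(u)(z-z0) + h0(u)) holding near (z0,u0), where g, h are analytic at z0, g(z0) = u0 and g'(z0) ≠ 0. Then h0(u) = (u - u0)^2 / K(z0, u) and K(z0, u0) = g'(z0)^2. -/
open Filter

/-- from the Weierstrass factorization
`(u - g z)² - (h z)²(z - z0)³ = K z u · ((z-z0)² + h1 u (z-z0) + h0 u)`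
near `(z0, u0)` (with `u0 = g z0`, `g'(z0) ≠ 0`, `K(z0,u0) ≠ 0`,
`h0(u0) = h1(u0) = 0`) one gets `h0 u = (u-u0)²/K z0 u` near `u0`
and `K z0 u0 = g'(z0)²`. -/
theorem stmt3 (g h : ℂ → ℂ) (K : ℂ → ℂ → ℂ) (h0 h1 : ℂ → ℂ) (z0 u0 : ℂ)
    (hg : AnalyticAt ℂ g z0) (hh : AnalyticAt ℂ h z0)
    (hu0 : u0 = g z0) (hg' : deriv g z0 ≠ 0)
    (hK : AnalyticAt ℂ (fun p : ℂ × ℂ => K p.1 p.2) (z0, u0))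
    (hKne : K z0 u0 ≠ 0)
    (hh0 : AnalyticAt ℂ h0 u0) (hh1 : AnalyticAt ℂ h1 u0)
    (hh00 : h0 u0 = 0) (hh10 : h1 u0 = 0)
    (hfact : ∀ᶠ p : ℂ × ℂ in nhds (z0, u0),
      (p.2 - g p.1) ^ 2 - (h p.1) ^ 2 * (p.1 - z0) ^ 3
        = K p.1 p.2 * ((p.1 - z0) ^ 2 + h1 p.2 * (p.1 - z0) + h0 p.2)) :
    (∀ᶠ u in nhds u0, h0 u = (u - u0) ^ 2 / K z0 u) ∧
    K z0 u0 = (deriv g z0) ^ 2 := by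
  have hcontK : ContinuousAt (fun p : ℂ × ℂ => K p.1 p.2) (z0, u0) := hK.continuousAt
  have ht1 : Filter.Tendsto (fun u : ℂ => ((z0 : ℂ), u)) (nhds u0) (nhds (z0, u0)) :=
    (Continuous.prodMk_right z0).continuousAt
  have ht2 : Filter.Tendsto (fun z : ℂ => (z, u0)) (nhds z0) (nhds (z0, u0)) :=
    (Continuous.prodMk_left u0).continuousAt
  constructor
  · have hKc : ContinuousAt (fun u => K z0 u) u0 := hcontK.comp ht1
    have hKnz : ∀ᶠ u in nhds u0, K z0 u ≠ 0 := hKc.eventually_ne hKne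
    have hev := ht1.eventually hfact
    filter_upwards [hev, hKnz] with u h1' h2'
    simp only [sub_self] at h1'
    rw [eq_div_iff h2', hu0]
    linear_combination -h1'
  · have hKt : Filter.Tendsto (fun z => K z u0) (nhdsWithin z0 {z0}ᶜ) (nhds (K z0 u0)) :=
      (Filter.Tendsto.comp hcontK ht2).mono_left nhdsWithin_le_nhds
    have hS : HasDerivAt g (deriv g z0) z0 := hg.differentiableAt.hasDerivAt
    have hslope := hasDerivAt_iff_tendsto_slope.mp hS
    have hlim : Filter.Tendsto (fun z => (slope g z0 z) ^ 2 - h z ^ 2 * (z - z0))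
        (nhdsWithin z0 {z0}ᶜ) (nhds ((deriv g z0) ^ 2)) := by
      have h2 : Filter.Tendsto (fun z => h z ^ 2 * (z - z0)) (nhdsWithin z0 {z0}ᶜ)
          (nhds (h z0 ^ 2 * (z0 - z0))) :=
        (((hh.continuousAt.tendsto).pow 2).mul (tendsto_id.sub tendsto_const_nhds)).mono_left
          nhdsWithin_le_nhds
      have := (hslope.pow 2).sub h2
      simpa using this
    have heq : ∀ᶠ z in nhdsWithin z0 {z0}ᶜ, K z u0 = (slope g z0 z) ^ 2 - h z ^ 2 * (z - z0) := by
      have hev := ht2.eventually hfact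
      filter_upwards [nhdsWithin_le_nhds hev, self_mem_nhdsWithin] with z hz hzne
      have hzz : (z - z0) ≠ 0 := sub_ne_zero.mpr hzne
      rw [hh00, hh10] at hz
      rw [slope_def_field]
      field_simp
      linear_combination -hz + (u0 - 2 * g z + g z0) * hu0
    exact tendsto_nhds_unique hKt (hlim.congr' (heq.mono fun z hz => hz.symm))
end

section
/- Under the Weierstrass factorization of the previous context, the discriminant expression h1(u)²/4 − h0(u) vanishes to order at least 3 at u = u0; more precisely h1(u)²/4 − h0(u) = C·(u−u0)³ + O((u−u0)⁴) with C = h(z0)²/g'(z0)⁵. -/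
open Filter

private lemma analyticAt_dslope {f : ℂ → ℂ} {c : ℂ} (hf : AnalyticAt ℂ f c) :
    AnalyticAt ℂ (dslope f c) c := by
  obtain ⟨p, hp⟩ := hf
  exact ⟨p.fslope, hp.has_fpower_series_dslope_fslope⟩

private lemma mul_dslope_eq {f : ℂ → ℂ} {c : ℂ} (h0 : f c = 0) (u : ℂ) :
    (u - c) * dslope f c u = f u := by
  have := sub_smul_dslope f c u
  rw [smul_eq_mul] at this
  rw [this, h0, sub_zero]

private lemma lemA (v A B M G : ℂ) (hA : A ≠ 0)
    (hM : v * M = (2 * G * A + v * B) ^ 2 / 4 - A ^ 3) :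
    (-(2 * v * G + B * (v ^ 2 / A)) / A) ^ 2 / 4 - v ^ 2 / A = M / A ^ 4 * v ^ 3 := by
  have h1 : M / A ^ 4 * v ^ 3 = (v * M) * v ^ 2 / A ^ 4 := by ring
  rw [h1, hM]
  field_simp

private lemma lemQ (t s A B G W1 : ℂ) (hA : A ≠ 0)
    (hW : t * W1 = A - 2 * G * s + s ^ 2) :
    t ^ 2 + -(2 * (t * s) * G + B * ((t * s) ^ 2 / A)) / A * t + (t * s) ^ 2 / A
      = t ^ 3 * (W1 / A - B * s ^ 2 / A ^ 2) := by
  have h1 : t ^ 3 * (W1 / A - B * s ^ 2 / A ^ 2)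
      = (t * W1) * t ^ 2 / A - t ^ 3 * B * s ^ 2 / A ^ 2 := by ring
  rw [h1, hW]
  field_simp
  ring

/-- the discriminant `h1(u)²/4 − h0(u)` of the Weierstrass factorization
vanishes to order (at least) 3 at `u0`; more precisely
`h1(u)²/4 − h0(u) = C·(u−u0)³ + O((u−u0)⁴)` with `C = h(z0)²/g'(z0)⁵ ≠ 0`. -/
theorem stmt4 (g h : ℂ → ℂ) (K : ℂ → ℂ → ℂ) (h0 h1 : ℂ → ℂ) (z0 u0 : ℂ)
    (hg : AnalyticAt ℂ g z0) (hh : AnalyticAt ℂ h z0)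
    (hu0 : u0 = g z0) (hg' : deriv g z0 ≠ 0) (hhz0 : h z0 ≠ 0)
    (hK : AnalyticAt ℂ (fun p : ℂ × ℂ => K p.1 p.2) (z0, u0))
    (hKval : K z0 u0 = (deriv g z0) ^ 2)
    (hh0 : AnalyticAt ℂ h0 u0) (hh1 : AnalyticAt ℂ h1 u0)
    (hh00 : h0 u0 = 0) (hh10 : h1 u0 = 0)
    (hh0eq : ∀ᶠ u in nhds u0, h0 u = (u - u0) ^ 2 / K z0 u)
    (hh1eq : ∀ᶠ u in nhds u0,
      h1 u = -(2 * (u - u0) * deriv g z0 + deriv (fun z => K z u) z0 * h0 u) / K z0 u)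
    (hfact : ∀ᶠ p : ℂ × ℂ in nhds (z0, u0),
      (p.2 - g p.1) ^ 2 - (h p.1) ^ 2 * (p.1 - z0) ^ 3
        = K p.1 p.2 * ((p.1 - z0) ^ 2 + h1 p.2 * (p.1 - z0) + h0 p.2)) :
    ∃ φ : ℂ → ℂ, AnalyticAt ℂ φ u0 ∧
      φ u0 = (h z0) ^ 2 / (deriv g z0) ^ 5 ∧ φ u0 ≠ 0 ∧
      ∀ᶠ u in nhds u0, h1 u ^ 2 / 4 - h0 u = φ u * (u - u0) ^ 3 := by
  set g' : ℂ := deriv g z0 with hg'def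
  set F : ℂ × ℂ → ℂ := fun p => K p.1 p.2 with hF
  set a : ℂ → ℂ := fun u => K z0 u with haDef
  set bb : ℂ → ℂ := fun u => (fderiv ℂ F (z0, u)) (1, 0) with hbbDef
  -- basic analyticity
  have hinc : AnalyticAt ℂ (fun u : ℂ => ((z0, u) : ℂ × ℂ)) u0 :=
    analyticAt_const.prod analyticAt_id
  have ha : AnalyticAt ℂ a u0 := hK.comp hinc
  have ha0 : a u0 = g' ^ 2 := hKval
  have hane : a u0 ≠ 0 := by rw [ha0]; exact pow_ne_zero _ hg'
  have haev : ∀ᶠ u in nhds u0, a u ≠ 0 := ha.continuousAt.eventually_ne hane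
  have hbb : AnalyticAt ℂ bb u0 := by
    have h1' : AnalyticAt ℂ (fun u : ℂ => fderiv ℂ F (z0, u)) u0 := hK.fderiv.comp hinc
    exact (ContinuousLinearMap.apply ℂ ℂ ((1 : ℂ), (0 : ℂ))).analyticAt _ |>.comp h1'
  -- the partial derivative eventually equals bb
  have hbeq : ∀ᶠ u in nhds u0, deriv (fun z => K z u) z0 = bb u := by
    have hev : ∀ᶠ p : ℂ × ℂ in nhds (z0, u0), AnalyticAt ℂ F p := hK.eventually_analyticAt
    have hto : Filter.Tendsto (fun u : ℂ => ((z0, u) : ℂ × ℂ)) (nhds u0) (nhds (z0, u0)) :=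
      hinc.continuousAt
    filter_upwards [hto.eventually hev] with u hu
    have hF' : HasFDerivAt F (fderiv ℂ F (z0, u)) (z0, u) :=
      hu.differentiableAt.hasFDerivAt
    have hι : HasDerivAt (fun z : ℂ => ((z, u) : ℂ × ℂ)) ((1 : ℂ), (0 : ℂ)) z0 :=
      (hasDerivAt_id z0).prodMk (hasDerivAt_const z0 u)
    have : HasDerivAt (fun z => K z u) ((fderiv ℂ F (z0, u)) (1, 0)) z0 :=
      by have h := hF'.comp_hasDerivAt z0 hι; exact h
    exact this.deriv
  -- s = dslope of g
  set s : ℂ → ℂ := dslope g z0 with hsDef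
  have hs : AnalyticAt ℂ s z0 := analyticAt_dslope hg
  have hs0 : s z0 = g' := dslope_same g z0
  have hsid : ∀ z : ℂ, (z - z0) * s z = g z - u0 := by
    intro z
    have := sub_smul_dslope g z0 z
    rw [smul_eq_mul] at this
    rw [hsDef, this, hu0]
  -- the main auxiliary functions (division-free)
  set e : ℂ → ℂ := fun u => 2 * g' * a u + (u - u0) * bb u with heDef
  set m : ℂ → ℂ := fun u => e u ^ 2 / 4 - a u ^ 3 with hmDef
  have he : AnalyticAt ℂ e u0 :=
    (analyticAt_const.mul ha).add ((analyticAt_id.sub analyticAt_const).mul hbb)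
  have he0 : e u0 = 2 * g' ^ 3 := by
    rw [heDef]; simp only []
    rw [ha0]; ring
  have hm : AnalyticAt ℂ m u0 := ((he.pow 2).div analyticAt_const (by norm_num)).sub (ha.pow 3)
  have hm0 : m u0 = 0 := by
    rw [hmDef]; simp only []
    rw [he0, ha0]; ring
  set m3 : ℂ → ℂ := dslope m u0 with hm3Def
  have hm3 : AnalyticAt ℂ m3 u0 := analyticAt_dslope hm
  have hm3id : ∀ u : ℂ, (u - u0) * m3 u = m u := fun u => mul_dslope_eq hm0 u
  -- derivative computations at u0
  have hsderiv : HasDerivAt s (deriv s z0) z0 := hs.differentiableAt.hasDerivAt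
  have hbderiv : HasDerivAt bb (deriv bb u0) u0 := hbb.differentiableAt.hasDerivAt
  have haderiv : HasDerivAt a (deriv a u0) u0 := ha.differentiableAt.hasDerivAt
  have heval : HasDerivAt e (2 * g' * deriv a u0 + bb u0) u0 := by
    have hq : HasDerivAt (fun u : ℂ => (u - u0) * bb u)
        (1 * bb u0 + (u0 - u0) * deriv bb u0) u0 :=
      ((hasDerivAt_id u0).sub_const u0).mul hbderiv
    have hq' : HasDerivAt (fun u : ℂ => (u - u0) * bb u) (bb u0) u0 := by
      simpa using hq
    exact (haderiv.const_mul (2 * g')).add hq'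
  have hm30 : m3 u0 = g' ^ 3 * (bb u0 - g' * deriv a u0) := by
    have h1' : HasDerivAt (fun u => e u ^ 2)
        (2 * e u0 ^ 1 * (2 * g' * deriv a u0 + bb u0)) u0 := heval.pow 2
    have h2' : HasDerivAt (fun u => a u ^ 3)
        (3 * a u0 ^ 2 * deriv a u0) u0 := haderiv.pow 3
    have h3' : HasDerivAt m
        (2 * e u0 ^ 1 * (2 * g' * deriv a u0 + bb u0) / 4 - 3 * a u0 ^ 2 * deriv a u0) u0 :=
      (h1'.div_const 4).sub h2'
    rw [hm3Def, dslope_same, h3'.deriv, he0, ha0]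
    ring
  -- THE KEY IDENTITY from the factorization along the curve u = g z
  have hu0' : g z0 = u0 := hu0.symm
  have hkey : bb u0 - g' * deriv a u0 = (h z0) ^ 2 := by
    have hgto : Filter.Tendsto g (nhds z0) (nhds u0) := by
      rw [hu0]; exact hg.continuousAt
    have hto : Filter.Tendsto (fun z : ℂ => ((z, g z) : ℂ × ℂ)) (nhds z0) (nhds (z0, u0)) := by
      have := (continuousAt_id.prodMk hg.continuousAt)
      rwa [ContinuousAt, id, hu0'] at this
    have hag : AnalyticAt ℂ (fun z => a (g z)) z0 :=
      (show AnalyticAt ℂ a (g z0) from hu0' ▸ ha).comp hg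
    have hag0 : a (g z0) = g' ^ 2 := by rw [hu0', ha0]
    have hagne : a (g z0) ≠ 0 := by rw [hag0]; exact pow_ne_zero _ hg'
    set W : ℂ → ℂ := fun z => a (g z) - 2 * g' * s z + s z ^ 2 with hWDef
    have hW : AnalyticAt ℂ W z0 :=
      (hag.sub (analyticAt_const.mul hs)).add (hs.pow 2)
    have hW0 : W z0 = 0 := by
      rw [hWDef]; simp only []
      rw [hs0, hag0]; ring
    set W1 : ℂ → ℂ := dslope W z0 with hW1Def
    have hW1 : AnalyticAt ℂ W1 z0 := analyticAt_dslope hW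
    have hW1id : ∀ z : ℂ, (z - z0) * W1 z = W z := fun z => mul_dslope_eq hW0 z
    have hbbg : AnalyticAt ℂ (fun z => bb (g z)) z0 :=
      (show AnalyticAt ℂ bb (g z0) from hu0' ▸ hbb).comp hg
    set r : ℂ → ℂ := fun z => W1 z / a (g z) - bb (g z) * s z ^ 2 / a (g z) ^ 2 with hrDef
    have hr : AnalyticAt ℂ r z0 :=
      (hW1.div hag hagne).sub
        ((hbbg.mul (hs.pow 2)).div (hag.pow 2) (pow_ne_zero 2 hagne))
    have hKg : AnalyticAt ℂ (fun z => K z (g z)) z0 := by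
      have h1' : AnalyticAt ℂ (fun z : ℂ => ((z, g z) : ℂ × ℂ)) z0 := analyticAt_id.prod hg
      have h2' : AnalyticAt ℂ F (z0, g z0) := by rw [hu0']; exact hK
      have h3' := AnalyticAt.comp (f := fun z : ℂ => ((z, g z) : ℂ × ℂ)) (x := z0) h2' h1'
      exact h3'
    -- the identity on a punctured neighborhood
    have hev : ∀ᶠ z in nhds z0,
        (z - z0) ^ 3 * (-(h z ^ 2)) = (z - z0) ^ 3 * (K z (g z) * r z) := by
      filter_upwards [hto.eventually hfact, hgto.eventually hh0eq, hgto.eventually hh1eq,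
        hgto.eventually hbeq, hgto.eventually haev] with z hf e0 e1 eb ea
      rw [e1, e0, eb] at hf
      have hv : g z - u0 = (z - z0) * s z := (hsid z).symm
      have hw : (z - z0) * W1 z = a (g z) - 2 * g' * s z + s z ^ 2 := hW1id z
      have hKa : K z0 (g z) = a (g z) := rfl
      rw [hKa, hv] at hf
      have hQ := lemQ (z - z0) (s z) (a (g z)) (bb (g z)) g' (W1 z) ea hw
      have hr' : r z = W1 z / a (g z) - bb (g z) * s z ^ 2 / a (g z) ^ 2 := by
        rw [hrDef]
      rw [← hr'] at hQ
      linear_combination hf + K z (g z) * hQ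
    have hev' : ∀ᶠ z in nhdsWithin z0 {z0}ᶜ, -(h z ^ 2) = K z (g z) * r z := by
      filter_upwards [eventually_nhdsWithin_of_eventually_nhds hev,
        self_mem_nhdsWithin] with z hz hz0
      have ht : (z - z0) ^ 3 ≠ 0 := pow_ne_zero 3 (sub_ne_zero.mpr hz0)
      exact mul_left_cancel₀ ht hz
    -- take limits along the punctured neighborhood
    have hL : ContinuousAt (fun z => -(h z ^ 2)) z0 := ((hh.pow 2).continuousAt).neg
    have hR : ContinuousAt (fun z => K z (g z) * r z) z0 :=
      (hKg.continuousAt).mul hr.continuousAt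
    have hlim : -(h z0 ^ 2) = K z0 (g z0) * r z0 := by
      have h1' : Filter.Tendsto (fun z => -(h z ^ 2)) (nhdsWithin z0 {z0}ᶜ)
          (nhds (-(h z0 ^ 2))) := hL.continuousWithinAt
      have h2' : Filter.Tendsto (fun z => K z (g z) * r z) (nhdsWithin z0 {z0}ᶜ)
          (nhds (K z0 (g z0) * r z0)) := hR.continuousWithinAt
      exact tendsto_nhds_unique (h1'.congr' hev') h2'
    -- compute r z0 using deriv W z0
    have hWv : W1 z0 = deriv a u0 * g' := by
      have hagd : HasDerivAt (fun z => a (g z)) (deriv a u0 * g') z0 := by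
        have h1' : HasDerivAt a (deriv a u0) (g z0) := hu0' ▸ haderiv
        exact h1'.comp z0 hg.differentiableAt.hasDerivAt
      have hWd : HasDerivAt W
          (deriv a u0 * g' - 2 * g' * deriv s z0 + 2 * s z0 ^ 1 * deriv s z0) z0 :=
        (hagd.sub (hsderiv.const_mul (2 * g'))).add (hsderiv.pow 2)
      rw [hW1Def, dslope_same, hWd.deriv, hs0]
      ring
    have hrv : r z0 = deriv a u0 * g' / g' ^ 2 - bb u0 * g' ^ 2 / g' ^ 4 := by
      rw [hrDef]; simp only []
      rw [hWv, hs0, hag0, hu0']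
      ring
    rw [hrv, hu0', hKval] at hlim
    have hthis : -(h z0 ^ 2) = g' * deriv a u0 - bb u0 := by
      rw [hlim]; field_simp
    linear_combination hthis
  -- define φ
  have hφval : m3 u0 / a u0 ^ 4 = h z0 ^ 2 / g' ^ 5 := by
    rw [hm30, hkey, ha0]
    field_simp
  refine ⟨fun u => m3 u / a u ^ 4, (hm3.div (ha.pow 4) (pow_ne_zero 4 hane)), hφval, ?_, ?_⟩
  · show m3 u0 / a u0 ^ 4 ≠ 0
    rw [hφval]
    exact div_ne_zero (pow_ne_zero 2 hhz0) (pow_ne_zero 5 hg')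
  · filter_upwards [hh0eq, hh1eq, hbeq, haev] with u e0 e1 eb ea
    have hKa : K z0 u = a u := rfl
    have hm' : (u - u0) * m3 u = (2 * g' * a u + (u - u0) * bb u) ^ 2 / 4 - a u ^ 3 := by
      have h' := hm3id u
      rw [hmDef, heDef] at h'
      exact h'
    show h1 u ^ 2 / 4 - h0 u = m3 u / a u ^ 4 * (u - u0) ^ 3
    rw [e1, e0, eb, hKa]
    exact lemA (u - u0) (a u) (bb u) (m3 u) g' ea hm'
end
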